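/- The map $x : \mathbb{R} \times \mathbb{R}^{n-1} \to \mathbb{R}^{n+1}$ given by $x_1 = 2\sum_{k=2}^n u_k^2 + e^{2t}$, $x_k = u_k$ ($2\leq k\leq n$), $x_{n+1} = -\tfrac{t}{2}$ satisfies the system of PDEs: $x_{tt} = 2x_t + Y$, $x_{tu_k} = 0$, $x_{u_ku_k} = 2e^{-2t}x_t + e^{-2t}Y$, and $x_{u_ku_j} = 0$ for $2\leq j\neq k\leq n$, where $Y = (0,\dots,0,1)$. -/

import Mathlib

noncomputable section

/-- Partial derivative of a vector-valued map in the `i`-th coordinate direction. -/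
def pdV (n m : ℕ) (i : Fin n) (F : (Fin n → ℝ) → (Fin m → ℝ)) :
    (Fin n → ℝ) → (Fin m → ℝ) :=
  fun v => fderiv ℝ F v (Pi.single i 1)

/-- The map `x(t,u₂,…,uₙ)` of (4.39): `x₁ = 2∑ u_k² + e^{2t}`, `x_k = u_k`, `x_{n+1} = -t/2`,
where coordinate `0` of the domain is `t` and coordinates `k ≠ 0` are the `u`'s. -/
def X13 (n : ℕ) [NeZero n] (v : Fin n → ℝ) : Fin (n + 1) → ℝ := fun j =>
  if j = 0 then 2 * (∑ k ∈ Finset.univ \ {0}, (v k) ^ 2) + Real.exp (2 * v 0)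
  else if h : (j : ℕ) < n then v ⟨j, h⟩
  else -(v 0) / 2

open ContinuousLinearMap in
private lemma hasFD0 {n : ℕ} [NeZero n] (v : Fin n → ℝ) :
    HasFDerivAt (fun v : Fin n → ℝ =>
        2 * (∑ k ∈ Finset.univ \ {0}, (v k) ^ 2) + Real.exp (2 * v 0))
      ((2:ℝ) • (∑ k ∈ Finset.univ \ {0},
          (v k • (proj k : (Fin n → ℝ) →L[ℝ] ℝ) + v k • (proj k : (Fin n → ℝ) →L[ℝ] ℝ)))
        + Real.exp (2 * v 0) • ((2:ℝ) • (proj 0 : (Fin n → ℝ) →L[ℝ] ℝ))) v := by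
  have hs : HasFDerivAt (fun v : Fin n → ℝ => ∑ k ∈ Finset.univ \ {0}, (v k) ^ 2)
      (∑ k ∈ Finset.univ \ {0},
        (v k • (proj k : (Fin n → ℝ) →L[ℝ] ℝ) + v k • (proj k : (Fin n → ℝ) →L[ℝ] ℝ))) v := by
    apply HasFDerivAt.fun_sum
    intro k _
    have h := (hasFDerivAt_apply (𝕜 := ℝ) k v).fun_mul (hasFDerivAt_apply (𝕜 := ℝ) k v)
    simpa [pow_two] using h
  have he : HasFDerivAt (fun v : Fin n → ℝ => Real.exp (2 * v 0))
      (Real.exp (2 * v 0) • ((2:ℝ) • (proj 0 : (Fin n → ℝ) →L[ℝ] ℝ))) v :=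
    ((hasFDerivAt_apply 0 v).const_mul 2).exp
  exact (hs.const_mul 2).add he

open ContinuousLinearMap in
private lemma hasFD_last {n : ℕ} [NeZero n] (v : Fin n → ℝ) :
    HasFDerivAt (fun v : Fin n → ℝ => -(v 0) / 2)
      ((-(1/2) : ℝ) • (proj 0 : (Fin n → ℝ) →L[ℝ] ℝ)) v := by
  have h := (hasFDerivAt_apply (𝕜 := ℝ) 0 v).const_mul (-(1/2) : ℝ)
  have : (fun v : Fin n → ℝ => -(1/2) * v 0) = fun v : Fin n → ℝ => -(v 0) / 2 := by
    funext v; ring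
  rwa [this] at h

private lemma diffX13 {n : ℕ} [NeZero n] (v : Fin n → ℝ) (j : Fin (n + 1)) :
    DifferentiableAt ℝ (fun v => X13 n v j) v := by
  by_cases hj : j = 0
  · subst hj
    simp only [X13, if_pos rfl]
    exact (hasFD0 v).differentiableAt
  · by_cases h : (j : ℕ) < n
    · simp only [X13, if_neg hj, dif_pos h]
      exact (hasFDerivAt_apply (𝕜 := ℝ) (⟨j, h⟩ : Fin n) v).differentiableAt
    · simp only [X13, if_neg hj, dif_neg h]
      exact (hasFD_last v).differentiableAt

private lemma pdV_X13 {n : ℕ} [NeZero n] (i : Fin n) :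
    pdV n (n + 1) i (X13 n) = fun (v : Fin n → ℝ) (j : Fin (n + 1)) =>
      if j = 0 then (if i = 0 then 2 * Real.exp (2 * v 0) else 4 * v i)
      else if h : (j : ℕ) < n then (if (⟨j, h⟩ : Fin n) = i then 1 else 0)
      else if i = 0 then -(1/2) else 0 := by
  funext v j
  have hpi : fderiv ℝ (fun v (j : Fin (n + 1)) => X13 n v j) v =
      ContinuousLinearMap.pi fun j => fderiv ℝ (fun v => X13 n v j) v :=
    fderiv_pi (diffX13 v)
  have hX : X13 n = fun v (j : Fin (n + 1)) => X13 n v j := rfl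
  rw [pdV, hX, hpi, ContinuousLinearMap.pi_apply]
  by_cases hj : j = 0
  · subst hj
    have hf : (fun v : Fin n → ℝ => X13 n v 0) =
        fun v : Fin n → ℝ => 2 * (∑ k ∈ Finset.univ \ {0}, (v k) ^ 2) + Real.exp (2 * v 0) := by
      funext v; simp [X13]
    rw [hf, (hasFD0 v).fderiv]
    simp only [ContinuousLinearMap.add_apply, ContinuousLinearMap.smul_apply,
      ContinuousLinearMap.sum_apply, ContinuousLinearMap.proj_apply, Pi.single_apply,
      smul_eq_mul, mul_ite, mul_one, mul_zero, if_pos rfl]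
    by_cases hi : i = 0
    · subst hi
      rw [Finset.sum_eq_zero]
      · simp [mul_comm]
      · intro k hk
        simp only [Finset.mem_sdiff, Finset.mem_univ, Finset.mem_singleton, true_and] at hk
        simp [if_neg hk]
    · rw [if_neg hi]
      have : ∀ k ∈ Finset.univ \ ({0} : Finset (Fin n)),
          ((if k = i then v k else 0) + if k = i then v k else 0) =
            if k = i then v k + v k else 0 := by
        intro k _; split <;> simp
      rw [Finset.sum_congr rfl this, Finset.sum_ite_eq' (Finset.univ \ {0}) i (fun k => v k + v k)]
      have hi' : i ∈ Finset.univ \ ({0} : Finset (Fin n)) := by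
        simp [Finset.mem_sdiff, hi]
      rw [if_pos hi', if_neg (fun hh : (0 : Fin n) = i => hi hh.symm)]
      simp [mul_comm, mul_add]
      ring
  · by_cases h : (j : ℕ) < n
    · have hf : (fun v : Fin n → ℝ => X13 n v j) = fun v : Fin n → ℝ => v ⟨j, h⟩ := by
        funext v; simp [X13, if_neg hj, dif_pos h]
      rw [hf, (hasFDerivAt_apply (𝕜 := ℝ) (⟨j, h⟩ : Fin n) v).fderiv]
      simp [Pi.single_apply, if_neg hj, h]
    · have hf : (fun v : Fin n → ℝ => X13 n v j) = fun v : Fin n → ℝ => -(v 0) / 2 := by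
        funext v; simp [X13, if_neg hj, dif_neg h]
      rw [hf, (hasFD_last v).fderiv]
      simp only [ContinuousLinearMap.smul_apply, ContinuousLinearMap.proj_apply,
        Pi.single_apply, smul_eq_mul, if_neg hj, dif_neg h]
      by_cases hi : i = 0
      · subst hi; simp
      · rw [if_neg (fun hh => hi hh.symm), if_neg hi]; ring

private lemma pdV2_X13 {n : ℕ} [NeZero n] (i i' : Fin n) (v : Fin n → ℝ) :
    pdV n (n + 1) i' (pdV n (n + 1) i (X13 n)) v = fun j =>
      if j = 0 then
        (if i = 0 then (if i' = 0 then 4 * Real.exp (2 * v 0) else 0)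
         else (if i = i' then 4 else 0))
      else 0 := by
  rw [pdV_X13 i]
  set G : (Fin n → ℝ) → Fin (n + 1) → ℝ := fun v j =>
    if j = 0 then (if i = 0 then 2 * Real.exp (2 * v 0) else 4 * v i)
    else if h : (j : ℕ) < n then (if (⟨j, h⟩ : Fin n) = i then 1 else 0)
    else if i = 0 then -(1/2) else 0 with hG
  have hcomp0 : (fun v : Fin n → ℝ => G v 0) =
      fun v : Fin n → ℝ => if i = 0 then 2 * Real.exp (2 * v 0) else 4 * v i := by
    funext v; simp [hG]
  have hd0 : HasFDerivAt (fun v : Fin n → ℝ => G v 0)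
      (if i = 0 then
        ((2:ℝ) • (Real.exp (2 * v 0) •
          ((2:ℝ) • (ContinuousLinearMap.proj 0 : (Fin n → ℝ) →L[ℝ] ℝ))))
       else ((4:ℝ) • (ContinuousLinearMap.proj i : (Fin n → ℝ) →L[ℝ] ℝ))) v := by
    rw [hcomp0]
    by_cases hi : i = 0
    · simp only [if_pos hi]
      exact (((hasFDerivAt_apply (𝕜 := ℝ) 0 v).const_mul 2).exp).const_mul 2
    · simp only [if_neg hi]
      exact (hasFDerivAt_apply (𝕜 := ℝ) i v).const_mul 4
  have hdiff : ∀ j : Fin (n + 1), DifferentiableAt ℝ (fun v => G v j) v := by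
    intro j
    by_cases hj : j = 0
    · subst hj; exact hd0.differentiableAt
    · by_cases h : (j : ℕ) < n
      · have : (fun v : Fin n → ℝ => G v j) =
            fun _ : Fin n → ℝ => (if (⟨j, h⟩ : Fin n) = i then (1:ℝ) else 0) := by
          funext v; simp [hG, if_neg hj, dif_pos h]
        rw [this]; exact differentiableAt_const _
      · have : (fun v : Fin n → ℝ => G v j) =
            fun _ : Fin n → ℝ => (if i = 0 then -(1/2 : ℝ) else 0) := by
          funext v; simp [hG, if_neg hj, dif_neg h]
        rw [this]; exact differentiableAt_const _
  funext j
  have hpi : fderiv ℝ (fun v (j : Fin (n + 1)) => G v j) v =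
      ContinuousLinearMap.pi fun j => fderiv ℝ (fun v => G v j) v :=
    fderiv_pi hdiff
  have hGe : G = fun v (j : Fin (n + 1)) => G v j := rfl
  rw [pdV, hGe, hpi, ContinuousLinearMap.pi_apply]
  by_cases hj : j = 0
  · subst hj
    rw [hd0.fderiv]
    by_cases hi : i = 0
    · simp only [if_pos hi, if_pos rfl, ContinuousLinearMap.smul_apply,
        ContinuousLinearMap.proj_apply, Pi.single_apply, smul_eq_mul]
      by_cases hi' : i' = 0
      · subst hi'; simp; ring
      · rw [if_neg (fun hh : (0:Fin n) = i' => hi' hh.symm), if_neg hi']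
        simp
    · simp only [if_neg hi, if_pos rfl, ContinuousLinearMap.smul_apply,
        ContinuousLinearMap.proj_apply, Pi.single_apply, smul_eq_mul]
      by_cases hii : i = i'
      · subst hii; simp
      · simp [if_neg hii]
  · rw [if_neg hj]
    by_cases h : (j : ℕ) < n
    · have : (fun v : Fin n → ℝ => G v j) =
          fun _ : Fin n → ℝ => (if (⟨j, h⟩ : Fin n) = i then (1:ℝ) else 0) := by
        funext v; simp [hG, if_neg hj, dif_pos h]
      rw [this, fderiv_fun_const]
      simp
    · have : (fun v : Fin n → ℝ => G v j) =
          fun _ : Fin n → ℝ => (if i = 0 then -(1/2 : ℝ) else 0) := by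
        funext v; simp [hG, if_neg hj, dif_neg h]
      rw [this, fderiv_fun_const]
      simp

private lemma last_ne_zero {n : ℕ} [NeZero n] : (Fin.last n) ≠ (0 : Fin (n + 1)) := by
  intro h
  have := congrArg Fin.val h
  simp [Fin.last] at this
  exact (NeZero.ne n) this

/-- the map (4.39) satisfies the system `x_{tt} = 2x_t + Y`, `x_{tu_k} = 0`,
`x_{u_k u_k} = 2e^{-2t} x_t + e^{-2t} Y`, `x_{u_k u_j} = 0` (`j ≠ k`), with `Y = (0,…,0,1)`. -/
theorem X13_pde (n : ℕ) [NeZero n] (hn : 2 ≤ n) (v : Fin n → ℝ) :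
    pdV n (n + 1) 0 (pdV n (n + 1) 0 (X13 n)) v =
        (2 : ℝ) • pdV n (n + 1) 0 (X13 n) v + Pi.single (Fin.last n) 1 ∧
    (∀ k : Fin n, k ≠ 0 → pdV n (n + 1) k (pdV n (n + 1) 0 (X13 n)) v = 0) ∧
    (∀ k : Fin n, k ≠ 0 →
      pdV n (n + 1) k (pdV n (n + 1) k (X13 n)) v =
        (2 * Real.exp (-(2 * v 0))) • pdV n (n + 1) 0 (X13 n) v +
          Real.exp (-(2 * v 0)) • (Pi.single (Fin.last n) 1 : Fin (n + 1) → ℝ)) ∧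
    (∀ k j : Fin n, k ≠ 0 → j ≠ 0 → k ≠ j →
      pdV n (n + 1) k (pdV n (n + 1) j (X13 n)) v = 0) := by
  have hlast : ∀ j : Fin (n + 1), ¬ ((j : ℕ) < n) → j = Fin.last n := by
    intro j hj
    have : (j : ℕ) = n := le_antisymm (Nat.lt_succ_iff.mp j.isLt) (le_of_not_gt hj)
    exact Fin.ext this
  have hmid : ∀ j : Fin (n + 1), (j : ℕ) < n → j ≠ Fin.last n := by
    intro j hj h
    rw [h] at hj
    simp [Fin.last] at hj
  refine ⟨?_, ?_, ?_, ?_⟩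
  · rw [pdV2_X13 0 0 v, pdV_X13 0]
    funext j
    simp only [Pi.add_apply, Pi.smul_apply, smul_eq_mul, Pi.single_apply]
    by_cases hj : j = 0
    · subst hj
      have h0 : ¬ ((0 : Fin (n+1)) = Fin.last n) := fun hh => last_ne_zero hh.symm
      simp [h0]
      ring
    · rw [if_neg hj, if_neg hj]
      by_cases h : (j : ℕ) < n
      · have h1 : (⟨j, h⟩ : Fin n) ≠ 0 := by
          intro hh
          exact hj (Fin.ext (by simpa using congrArg Fin.val hh))
        simp [dif_pos h, h1, hmid j h]
      · simp [dif_neg h, hlast j h]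
  · intro k hk
    rw [pdV2_X13 0 k v]
    funext j
    by_cases hj : j = 0
    · subst hj
      rw [if_pos rfl, if_pos rfl, if_neg hk]
      rfl
    · rw [if_neg hj]; rfl
  · intro k hk
    rw [pdV2_X13 k k v, pdV_X13 0]
    funext j
    simp only [Pi.add_apply, Pi.smul_apply, smul_eq_mul, Pi.single_apply]
    by_cases hj : j = 0
    · subst hj
      have h0 : ¬ ((0 : Fin (n+1)) = Fin.last n) := fun hh => last_ne_zero hh.symm
      simp [h0, hk, Real.exp_neg]
      field_simp
      ring
    · rw [if_neg hj, if_neg hj]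
      by_cases h : (j : ℕ) < n
      · have h1 : (⟨j, h⟩ : Fin n) ≠ 0 := by
          intro hh
          exact hj (Fin.ext (by simpa using congrArg Fin.val hh))
        simp [dif_pos h, h1, hmid j h]
      · simp [dif_neg h, hlast j h, Real.exp_neg]
        ring
  · intro k j hk hj hkj
    rw [pdV2_X13 j k v]
    funext j'
    by_cases hj' : j' = 0
    · subst hj'
      rw [if_pos rfl, if_neg hj, if_neg (fun h => hkj h.symm)]
      rfl
    · rw [if_neg hj']; rfl
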